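/- Let X be a cyclic Banach C(K)-module with K hyperstonian and m : C(K) → L(X) an isometric unital algebra homomorphism that is continuous from the weak-star topology of C(K) = (C(K)_*)' to the weak operator topology of L(X). Then the Boolean algebra of idempotents of C(K) is Bade complete on X: for any increasing net of idempotents {e_α} with supremum e, ‖m(e)x − m(e_α)x‖ → 0 for all x ∈ X. -/

import Mathlib

/-! Weak-star continuity is only assumed for nets indexed by a `Type`, so the net `m e x₀`
(`e ∈ S`) is handled through monotone sequences. For a monotone sequence `t` with supremum `b` (which exists since `K`
is extremally disconnected), `m (b - t n) x` is weakly null and the contractions `m (b - t N)` turn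
this into norm convergence by Mazur's lemma. Hence every monotone sequence converges, so the net is
Cauchy and converges to `m b x₀` along a suitable monotone sequence with supremum `b`. Since `x₀`
is separating, each `e ∈ S` satisfies `e ≤ b`, so `b = E`; density of the orbit of `x₀` and the
bound `‖m e‖ ≤ 1` then give convergence at every `x`. -/

open Filter Topology

/-- The Boolean algebra of idempotents of `C(K)` is Bade complete on `X`. -/
def BadeComplete {K X : Type*} [TopologicalSpace K] [CompactSpace K] [T2Space K]
    [NormedAddCommGroup X] [NormedSpace ℝ X] [CompleteSpace X]
    (m : C(K, ℝ) →ₐ[ℝ] (X →L[ℝ] X)) : Prop :=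
  ∀ S : Set C(K, ℝ), (∀ e ∈ S, e * e = e) → S.Nonempty → DirectedOn (· ≤ ·) S →
    ∀ E : C(K, ℝ), E * E = E → IsLUB S E →
      ∀ x : X, Filter.Tendsto (fun e : S => m (e : C(K, ℝ)) x) Filter.atTop (nhds (m E x))

/-- A bounded functional on `C(K)` is order continuous if it is continuous along
suprema of upward-directed sets. -/
def OrderContinuousFunc {K : Type*} [TopologicalSpace K] [CompactSpace K] [T2Space K]
    (φ : C(K, ℝ) →L[ℝ] ℝ) : Prop :=
  ∀ S : Set C(K, ℝ), S.Nonempty → DirectedOn (· ≤ ·) S → ∀ b : C(K, ℝ), IsLUB S b →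
    Filter.Tendsto (fun a : S => φ (a : C(K, ℝ))) Filter.atTop (nhds (φ b))

/-- `K` is hyperstonian: it is extremally disconnected (assumed separately) and the order
continuous functionals on `C(K)` separate points. -/
def SeparatesByNormalFunctionals (K : Type*) [TopologicalSpace K] [CompactSpace K]
    [T2Space K] : Prop :=
  ∀ a : C(K, ℝ), a ≠ 0 → ∃ φ : C(K, ℝ) →L[ℝ] ℝ, OrderContinuousFunc φ ∧ φ a ≠ 0

/-- `m` is continuous from the weak-star topology of `C(K)` (tested against the order
continuous functionals, which form the predual when `K` is hyperstonian) to the weak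
operator topology of `L(X)`, stated via nets. -/
def WStarWOTContinuous {K X : Type*} [TopologicalSpace K] [CompactSpace K] [T2Space K]
    [NormedAddCommGroup X] [NormedSpace ℝ X] [CompleteSpace X]
    (m : C(K, ℝ) →ₐ[ℝ] (X →L[ℝ] X)) : Prop :=
  ∀ (ι : Type) (_ : Preorder ι) (f : ι → C(K, ℝ)) (a : C(K, ℝ)),
    (∀ φ : C(K, ℝ) →L[ℝ] ℝ, OrderContinuousFunc φ →
      Filter.Tendsto (fun i => φ (f i)) Filter.atTop (nhds (φ a))) →
    ∀ (x : X) (x' : X →L[ℝ] ℝ),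
      Filter.Tendsto (fun i => x' (m (f i) x)) Filter.atTop (nhds (x' (m a x)))

open Set

section Nets

variable {α β : Type*} [Preorder α]

lemma exists_monotone_forall_ge [IsDirectedOrder α] (d : ℕ → α) :
    ∃ u : ℕ → α, Monotone u ∧ ∀ n, d n ≤ u n := by
  choose g hg₁ hg₂ using fun a b : α => exists_ge_ge a b
  let u : ℕ → α := fun n => Nat.rec (d 0) (fun n x => g x (d (n + 1))) n
  refine ⟨u, monotone_nat_of_le_succ fun n => hg₁ _ _, fun n => ?_⟩
  cases n with
  | zero => exact le_rfl
  | succ n => exact hg₂ _ _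

variable [Nonempty α] [PseudoMetricSpace β] {v : α → β}

/-- Along each monotone sequence, `v` would otherwise jump by `ε` infinitely often. -/
lemma exists_forall_ge_dist_lt_of_cauchySeq_comp
    (hv : ∀ u : ℕ → α, Monotone u → CauchySeq (v ∘ u)) {ε : ℝ} (hε : 0 < ε) :
    ∃ d, ∀ f ≥ d, dist (v f) (v d) < ε := by
  by_contra! h
  choose F hF hFd using h
  let u : ℕ → α := fun n => F^[n] (Classical.arbitrary α)
  have hu : Monotone u := monotone_nat_of_le_succ fun n => by
    simp only [u, Function.iterate_succ_apply']
    exact hF _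
  obtain ⟨N, hN⟩ := Metric.cauchySeq_iff'.1 (hv u hu) ε hε
  have := hN (N + 1) N.le_succ
  simp only [Function.comp_apply, u, Function.iterate_succ_apply'] at this
  exact (hFd _).not_gt this

lemma exists_monotone_forall_tendsto_of_cauchySeq_comp [IsDirectedOrder α]
    (hv : ∀ u : ℕ → α, Monotone u → CauchySeq (v ∘ u)) :
    ∃ u : ℕ → α, Monotone u ∧ ∀ y, Tendsto (v ∘ u) atTop (𝓝 y) → Tendsto v atTop (𝓝 y) := by
  choose d hd using fun n : ℕ =>
    exists_forall_ge_dist_lt_of_cauchySeq_comp hv (Nat.one_div_pos_of_nat (n := n))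
  obtain ⟨u, hu, hdu⟩ := exists_monotone_forall_ge d
  refine ⟨u, hu, fun y hy => Metric.tendsto_nhds.2 fun ε hε => ?_⟩
  obtain ⟨n, hn⟩ := exists_nat_one_div_lt (half_pos hε)
  have hdy : dist y (v (d n)) ≤ 1 / (n + 1) :=
    le_of_tendsto (hy.dist tendsto_const_nhds) <| (eventually_ge_atTop n).mono fun k hk =>
      (hd n _ ((hdu n).trans (hu hk))).le
  filter_upwards [eventually_ge_atTop (d n)] with f hf
  calc dist (v f) y ≤ dist (v f) (v (d n)) + dist y (v (d n)) := dist_triangle_right _ _ _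
    _ < ε / 2 + ε / 2 := add_lt_add_of_lt_of_le ((hd n f hf).trans hn) (hdy.trans hn.le)
    _ = ε := add_halves ε

end Nets

section WeaklyNull

variable {X : Type*} [NormedAddCommGroup X] [NormedSpace ℝ X]

lemma mem_closure_convexHull_range_of_weak_tendsto {ι : Type*} {l : Filter ι} [l.NeBot]
    {r : ι → X} {x : X} (hr : ∀ f : X →L[ℝ] ℝ, Tendsto (fun i => f (r i)) l (𝓝 (f x))) :
    x ∈ closure (convexHull ℝ (range r)) := by
  by_contra hx
  obtain ⟨f, u, hfx, hfr⟩ :=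
    geometric_hahn_banach_point_closed (convex_convexHull ℝ _).closure isClosed_closure hx
  have : u ≤ f x := ge_of_tendsto' (hr f) fun i =>
    (hfr _ (subset_closure (subset_convexHull ℝ _ (mem_range_self i)))).le
  linarith

/-- By Hahn-Banach, `0` is a norm limit of convex combinations of the `r n`, and `A M` maps each
such combination to `r M` once `M` is large. -/
theorem tendsto_zero_of_weakly_null_of_contractions {r : ℕ → X} {A : ℕ → X →L[ℝ] X}
    (hA : ∀ N, ‖A N‖ ≤ 1) (hAr : ∀ n N, n ≤ N → A N (r n) = r N)
    (hr : ∀ f : X →L[ℝ] ℝ, Tendsto (fun n => f (r n)) atTop (𝓝 0)) :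
    Tendsto r atTop (𝓝 0) := by
  have h0 : (0 : X) ∈ closure (convexHull ℝ (range r)) :=
    mem_closure_convexHull_range_of_weak_tendsto fun f => by simpa using hr f
  have hhull : convexHull ℝ (range r) ⊆ {c | ∃ N, ∀ M ≥ N, A M c = r M} := by
    refine convexHull_min (range_subset_iff.2 fun n => ⟨n, hAr n⟩) ?_
    rintro c₁ ⟨N₁, h₁⟩ c₂ ⟨N₂, h₂⟩ a b - - hab
    refine ⟨max N₁ N₂, fun M hM => ?_⟩
    rw [map_add, map_smul, map_smul, h₁ M (le_of_max_le_left hM), h₂ M (le_of_max_le_right hM),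
      ← add_smul, hab, one_smul]
  refine Metric.tendsto_atTop.2 fun ε hε => ?_
  obtain ⟨c, hc, hcε⟩ := Metric.mem_closure_iff.1 h0 ε hε
  obtain ⟨N, hN⟩ := hhull hc
  refine ⟨N, fun M hM => ?_⟩
  rw [dist_zero_right, ← hN M hM]
  calc ‖A M c‖ ≤ 1 * ‖c‖ := (A M).le_of_opNorm_le (hA M) c
    _ < ε := by rwa [one_mul, ← dist_zero_left]

end WeaklyNull

theorem ContinuousLinearMap.tendsto_apply_of_dense {ι E F : Type*} [NormedAddCommGroup E]
    [NormedSpace ℝ E] [NormedAddCommGroup F] [NormedSpace ℝ F] {l : Filter ι}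
    {T : ι → E →L[ℝ] F} {T₀ : E →L[ℝ] F} (hT : ∃ C, ∀ i, ‖T i‖ ≤ C) {s : Set E} (hs : Dense s)
    (h : ∀ x ∈ s, Tendsto (fun i => T i x) l (𝓝 (T₀ x))) (x : E) :
    Tendsto (fun i => T i x) l (𝓝 (T₀ x)) := by
  have hequi : Equicontinuous fun i => ⇑(T i) :=
    ((NormedSpace.equicontinuous_TFAE T).out 5 1).1 hT
  exact hs.induction h (hequi.isClosed_setOfPred_tendsto T₀.continuous) x

namespace ContinuousMap

section Idempotent

variable {K : Type*} [TopologicalSpace K] {e f : C(K, ℝ)}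

lemma apply_eq_zero_or_one_of_isIdempotentElem (he : IsIdempotentElem e) (k : K) :
    e k = 0 ∨ e k = 1 :=
  IsIdempotentElem.iff_eq_zero_or_one.1 (he.map (evalAlgHom ℝ ℝ k))

lemma nonneg_of_isIdempotentElem (he : IsIdempotentElem e) : 0 ≤ e := le_def.2 fun k => by
  rcases apply_eq_zero_or_one_of_isIdempotentElem he k with h | h <;> simp [h]

lemma norm_le_one_of_isIdempotentElem [CompactSpace K] (he : IsIdempotentElem e) : ‖e‖ ≤ 1 :=
  (norm_le _ zero_le_one).2 fun k => by
    rcases apply_eq_zero_or_one_of_isIdempotentElem he k with h | h <;> simp [h]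

lemma le_iff_mul_eq_left (he : IsIdempotentElem e) (hf : IsIdempotentElem f) :
    e ≤ f ↔ e * f = e := by
  rw [le_def, ContinuousMap.ext_iff]
  refine forall_congr' fun k => ?_
  rcases apply_eq_zero_or_one_of_isIdempotentElem he k with h | h <;>
    rcases apply_eq_zero_or_one_of_isIdempotentElem hf k with h' | h' <;> simp [h, h']

lemma isIdempotentElem_sub_of_le (he : IsIdempotentElem e) (hf : IsIdempotentElem f)
    (hef : e ≤ f) : IsIdempotentElem (f - e) :=
  have h := (le_iff_mul_eq_left he hf).1 hef
  he.sub hf h (by rw [mul_comm, h])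

/-- The supremum is the indicator of the closure of the union of the supports, which is clopen
because `K` is extremally disconnected. -/
theorem exists_isLUB_of_isIdempotentElem [ExtremallyDisconnected K] {T : Set C(K, ℝ)}
    (hT : ∀ e ∈ T, IsIdempotentElem e) (hne : T.Nonempty) :
    ∃ b, IsIdempotentElem b ∧ IsLUB T b := by
  set U := ⋃ e ∈ T, e ⁻¹' Ioi (1 / 2)
  have hU : IsOpen U := isOpen_biUnion fun e _ => isOpen_Ioi.preimage e.continuous
  have hW : IsClopen (closure U) := ⟨isClosed_closure, ExtremallyDisconnected.open_closure U hU⟩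
  let b : C(K, ℝ) := ⟨(closure U).indicator 1,
    continuous_indicator (by simp [hW.frontier_eq]) continuousOn_const⟩
  have hb : ∀ k, b k = (closure U).indicator 1 k := fun _ => rfl
  have hmemU : ∀ e ∈ T, ∀ k, e k = 1 → k ∈ U := fun e he k h =>
    mem_biUnion he (by simp [h]; norm_num)
  refine ⟨b, ext fun k => ?_, fun e he => le_def.2 fun k => ?_, fun c hc => le_def.2 fun k => ?_⟩
  · by_cases hk : k ∈ closure U <;> simp [hb, hk]
  · rcases apply_eq_zero_or_one_of_isIdempotentElem (hT e he) k with h | h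
    · rw [h, hb]
      exact indicator_nonneg (fun _ _ => zero_le_one) k
    · rw [h, hb, indicator_of_mem (subset_closure (hmemU e he k h)), Pi.one_apply]
  · by_cases hk : k ∈ closure U
    · have hUc : U ⊆ {k | 1 ≤ c k} := by
        simp only [U, iUnion_subset_iff]
        intro e he k' hk'
        rcases apply_eq_zero_or_one_of_isIdempotentElem (hT e he) k' with h | h
        · simp [h] at hk'; norm_num at hk'
        · exact h ▸ le_def.1 (hc he) k'
      rw [hb, indicator_of_mem hk, Pi.one_apply]
      exact (isClosed_le continuous_const c.continuous).closure_subset_iff.2 hUc hk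
    · obtain ⟨e₀, he₀⟩ := hne
      rw [hb, indicator_of_notMem hk]
      exact (le_def.1 (nonneg_of_isIdempotentElem (hT e₀ he₀)) k).trans (le_def.1 (hc he₀) k)

end Idempotent

end ContinuousMap

section Module

open ContinuousMap

variable {K X : Type*} [TopologicalSpace K] [NormedAddCommGroup X] [NormedSpace ℝ X]
  (m : C(K, ℝ) →ₐ[ℝ] (X →L[ℝ] X))

lemma map_mul_apply (a c : C(K, ℝ)) (y : X) : m (a * c) y = m a (m c y) := by
  rw [map_mul]
  rfl

lemma map_apply_comm (a c : C(K, ℝ)) (y : X) : m a (m c y) = m c (m a y) := by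
  rw [← map_mul_apply, mul_comm, map_mul_apply]

lemma eq_zero_of_map_apply_eq_zero (hinj : Function.Injective m) {x₀ : X}
    (hcyc : DenseRange fun a : C(K, ℝ) => m a x₀) {d : C(K, ℝ)} (hd : m d x₀ = 0) : d = 0 := by
  have hmd : m d = 0 := ContinuousLinearMap.ext fun x =>
    hcyc.induction_on x (isClosed_eq (m d).continuous continuous_const) fun a => by
      rw [map_apply_comm, hd, map_zero]
      rfl
  exact (injective_iff_map_eq_zero m).1 hinj d hmd

/-- Passing to the limit in `m (e i) (m (e j) x₀) = m (e i) x₀` (for `j ≥ i`) gives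
`m (e i * b - e i) x₀ = 0`. -/
lemma le_of_tendsto_map_apply {x₀ : X} (hsep : ∀ d, m d x₀ = 0 → d = 0) {ι : Type*} [Preorder ι]
    [IsDirectedOrder ι] [Nonempty ι] {e : ι → C(K, ℝ)} (he : ∀ i, IsIdempotentElem (e i))
    (hmono : Monotone e) {b : C(K, ℝ)} (hb : IsIdempotentElem b)
    (h : Tendsto (fun i => m (e i) x₀) atTop (𝓝 (m b x₀))) (i : ι) : e i ≤ b := by
  have hlim : m (e i) (m b x₀) = m (e i) x₀ := by
    refine tendsto_nhds_unique (((m (e i)).continuous.tendsto _).comp h)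
      (tendsto_const_nhds.congr' ((eventually_ge_atTop i).mono fun j hij => ?_))
    change m (e i) x₀ = m (e i) (m (e j) x₀)
    rw [← map_mul_apply, (le_iff_mul_eq_left (he i) (he j)).1 (hmono hij)]
  refine (le_iff_mul_eq_left (he i) hb).2 (sub_eq_zero.1 (hsep _ ?_))
  rw [map_sub, _root_.sub_apply, map_mul_apply, hlim, sub_self]

variable [CompactSpace K]

lemma tendsto_map_apply_of_denseRange (hm : ∀ a, ‖m a‖ ≤ ‖a‖) {x₀ : X}
    (hcyc : DenseRange fun a : C(K, ℝ) => m a x₀) {ι : Type*} {l : Filter ι} {e : ι → C(K, ℝ)}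
    (he : ∀ i, IsIdempotentElem (e i)) {E : C(K, ℝ)}
    (h : Tendsto (fun i => m (e i) x₀) l (𝓝 (m E x₀))) (x : X) :
    Tendsto (fun i => m (e i) x) l (𝓝 (m E x)) := by
  refine ContinuousLinearMap.tendsto_apply_of_dense
    ⟨1, fun i => (hm _).trans (norm_le_one_of_isIdempotentElem (he i))⟩ hcyc
    (forall_mem_range.2 fun a => ?_) x
  simp only [map_apply_comm m _ a]
  exact ((m a).continuous.tendsto _).comp h

variable [T2Space K]

lemma OrderContinuousFunc.tendsto_of_monotone {φ : C(K, ℝ) →L[ℝ] ℝ} (hφ : OrderContinuousFunc φ)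
    {t : ℕ → C(K, ℝ)} (ht : Monotone t) {b : C(K, ℝ)} (hb : IsLUB (range t) b) :
    Tendsto (fun n => φ (t n)) atTop (𝓝 (φ b)) := by
  have hfac : Tendsto (rangeFactorization t) atTop atTop :=
    tendsto_atTop_atTop.2 fun ⟨_, n, hn⟩ => ⟨n, fun k hk => by subst hn; exact ht hk⟩
  exact (hφ _ (range_nonempty t) (directedOn_range.2 ht.directed_le) b hb).comp hfac

variable [CompleteSpace X] {m}

/-- Weak-star continuity makes `m (b - t n) x` weakly null, and the contraction `m (b - t N)` maps
`m (b - t n) x` to `m (b - t N) x` for `n ≤ N`. -/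
theorem WStarWOTContinuous.tendsto_map_apply_of_monotone (hcont : WStarWOTContinuous m)
    (hm : ∀ a, ‖m a‖ ≤ ‖a‖) {t : ℕ → C(K, ℝ)} (ht : ∀ n, IsIdempotentElem (t n))
    (hmono : Monotone t) {b : C(K, ℝ)} (hb : IsIdempotentElem b) (hlub : IsLUB (range t) b)
    (x : X) : Tendsto (fun n => m (t n) x) atTop (𝓝 (m b x)) := by
  have htb : ∀ n, t n * b = t n := fun n =>
    (le_iff_mul_eq_left (ht n) hb).1 (hlub.1 (mem_range_self n))
  have hr : Tendsto (fun n => m (b - t n) x) atTop (𝓝 0) := by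
    refine tendsto_zero_of_weakly_null_of_contractions (A := fun n => m (b - t n))
      (fun n => (hm _).trans (norm_le_one_of_isIdempotentElem
        (isIdempotentElem_sub_of_le (ht n) hb (hlub.1 (mem_range_self n)))))
      (fun n N hnN => ?_) (fun f => ?_)
    · have htnN := (le_iff_mul_eq_left (ht n) (ht N)).1 (hmono hnN)
      have : (b - t N) * (b - t n) = b - t N := by
        linear_combination hb.eq - htb n - htb N + htnN
      simp only [← map_mul_apply, this]
    · have hweak := hcont ℕ inferInstance t b (fun φ hφ => hφ.tendsto_of_monotone hmono hlub) x f
      simpa [map_sub] using (tendsto_const_nhds (x := f (m b x))).sub hweak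
  simpa [map_sub] using (tendsto_const_nhds (x := m b x)).sub hr

theorem WStarWOTContinuous.exists_isLUB_tendsto_map_apply [ExtremallyDisconnected K]
    (hcont : WStarWOTContinuous m) (hm : ∀ a, ‖m a‖ ≤ ‖a‖) {t : ℕ → C(K, ℝ)}
    (ht : ∀ n, IsIdempotentElem (t n)) (hmono : Monotone t) :
    ∃ b, IsIdempotentElem b ∧ IsLUB (range t) b ∧
      ∀ x : X, Tendsto (fun n => m (t n) x) atTop (𝓝 (m b x)) := by
  obtain ⟨b, hb, hlub⟩ :=
    exists_isLUB_of_isIdempotentElem (forall_mem_range.2 ht) (range_nonempty t)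
  exact ⟨b, hb, hlub, hcont.tendsto_map_apply_of_monotone hm ht hmono hb hlub⟩

end Module

theorem stmt13_general {K X : Type*} [TopologicalSpace K] [CompactSpace K] [T2Space K]
    [ExtremallyDisconnected K]
    [NormedAddCommGroup X] [NormedSpace ℝ X] [CompleteSpace X]
    (m : C(K, ℝ) →ₐ[ℝ] (X →L[ℝ] X))
    (hm : ∀ a : C(K, ℝ), ‖m a‖ = ‖a‖)
    (x₀ : X) (hcyc : DenseRange fun a : C(K, ℝ) => m a x₀)
    (hcont : WStarWOTContinuous m) :
    BadeComplete m := by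
  intro S hS hSne hSdir E hE hlub
  have : Nonempty S := hSne.to_subtype
  have : IsDirectedOrder S := hSdir.isDirectedOrder
  have hcontr : ∀ a, ‖m a‖ ≤ ‖a‖ := fun a => (hm a).le
  have hinj : Function.Injective m := (injective_iff_map_eq_zero m).2 fun a ha =>
    norm_eq_zero.1 (by rw [← hm, ha, norm_zero])
  have hSidem : ∀ e : S, IsIdempotentElem (e : C(K, ℝ)) := fun e => hS e e.2
  have hσ : ∀ u : ℕ → S, Monotone u → ∃ b, IsIdempotentElem b ∧
      IsLUB (range fun n => (u n : C(K, ℝ))) b ∧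
      ∀ x, Tendsto (fun n => m (u n) x) atTop (𝓝 (m b x)) :=
    fun u hu => hcont.exists_isLUB_tendsto_map_apply hcontr (fun n => hSidem (u n)) hu
  obtain ⟨u, hu, hvu⟩ := exists_monotone_forall_tendsto_of_cauchySeq_comp
    (v := fun e : S => m e x₀) fun u hu => by
      obtain ⟨b, -, -, hb⟩ := hσ u hu
      exact (hb x₀).cauchySeq
  obtain ⟨b, hb, hblub, hbu⟩ := hσ u hu
  have hv : Tendsto (fun e : S => m e x₀) atTop (𝓝 (m b x₀)) := hvu _ (hbu x₀)
  have hbE : b = E := le_antisymm (hblub.2 (forall_mem_range.2 fun n => hlub.1 (u n).2))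
    (hlub.2 fun e he => le_of_tendsto_map_apply m
      (fun d => eq_zero_of_map_apply_eq_zero m hinj hcyc) hSidem (fun _ _ h => h) hb hv ⟨e, he⟩)
  exact tendsto_map_apply_of_denseRange m hcontr hcyc hSidem (hbE ▸ hv)

/-- For a cyclic module over a hyperstonian `K` with `m` (weak-star, weak-operator)
continuous, the Boolean algebra of idempotents is Bade complete on `X`. -/
theorem stmt13 {K X : Type*} [TopologicalSpace K] [CompactSpace K] [T2Space K]
    [ExtremallyDisconnected K]
    [NormedAddCommGroup X] [NormedSpace ℝ X] [CompleteSpace X]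
    (hsep : SeparatesByNormalFunctionals K)
    (m : C(K, ℝ) →ₐ[ℝ] (X →L[ℝ] X))
    (hm : ∀ a : C(K, ℝ), ‖m a‖ = ‖a‖)
    (x₀ : X) (hcyc : DenseRange fun a : C(K, ℝ) => m a x₀)
    (hcont : WStarWOTContinuous m) :
    BadeComplete m :=
  stmt13_general m hm x₀ hcyc hcont
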